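/- Let T_n be the sequence of polynomials defined by T_0(x) = x and T_n(x) = (1 - x²)·T_{n-1}'(x) for n ≥ 1. Then for every n ≥ 1, ∫_{-1}^{1} T_n(x) dx = ((2n+2)/(2^{n+1} - 1)) · T_n(0). -/

import Mathlib

open Polynomial Real MeasureTheory

noncomputable def T : ℕ → Polynomial ℚ
  | 0 => Polynomial.X
  | n + 1 => (1 - Polynomial.X ^ 2) * Polynomial.derivative (T n)

/-!
Let `F(x, t) = ∑ Tₙ(x) tⁿ / n!`. The recursion says `∂ₜF = (1 - x²) ∂ₓF` with `F(x, 0) = x`, so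
`F(x, t) = tanh (t + artanh x) = (x + τ) / (1 + x τ)` with `τ = tanh t = F(0, t)`; in the formal
setting both identities follow from uniqueness of solutions of differential equations in `t`.
Since `∫₋₁¹ dx / (1 + x τ) = 2t / τ`, the series `J(t) = ∑ (∫₋₁¹ Tₙ) tⁿ / n!` satisfies
`τ² J = 2τ - 2t (1 - τ²)`. Together with the doubling formula `tanh 2t = 2τ / (1 + τ²)` this gives
`2 J(2t) - J(t) = 2τ + 2t τ'`, and comparing the coefficients of `tⁿ` is the claim.
-/

open scoped Nat PowerSeries

namespace PowerSeries

variable {R S : Type*} [CommRing R] [CommRing S]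

theorem derivative_map (f : R →+* S) (u : R⟦X⟧) :
    d⁄dX S (map f u) = map f (d⁄dX R u) := by
  ext n
  simp [coeff_derivative]

@[simp]
theorem constantCoeff_map (f : R →+* S) (u : R⟦X⟧) :
    constantCoeff (map f u) = f (constantCoeff u) := by
  rw [← coeff_zero_eq_constantCoeff_apply, coeff_map, coeff_zero_eq_constantCoeff_apply]

@[simp]
theorem constantCoeff_rescale (a : R) (u : R⟦X⟧) :
    constantCoeff (rescale a u) = constantCoeff u := by
  rw [← coeff_zero_eq_constantCoeff_apply, coeff_rescale, pow_zero, one_mul,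
    coeff_zero_eq_constantCoeff_apply]

theorem derivative_mul (u v : R⟦X⟧) : d⁄dX R (u * v) = u * d⁄dX R v + v * d⁄dX R u :=
  Derivation.leibniz _ u v

@[simp]
theorem derivative_ofNat (n : ℕ) [n.AtLeastTwo] : d⁄dX R (ofNat(n) : R⟦X⟧) = 0 := by
  have h := (d⁄dX R).map_natCast (OfNat.ofNat n)
  rwa [Nat.cast_ofNat] at h

theorem derivative_eq_of_mul_eq_one {u v : R⟦X⟧} (h : u * v = 1) :
    d⁄dX R v = -v ^ 2 * d⁄dX R u :=
  (d⁄dX R).leibniz_of_mul_eq_one ((mul_comm v u).trans h)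

theorem coeff_X_mul_derivative (u : R⟦X⟧) (n : ℕ) :
    coeff n (X * d⁄dX R u) = n * coeff n u := by
  cases n with
  | zero => simp
  | succ n => rw [coeff_succ_X_mul, coeff_derivative]; push_cast; ring

theorem derivative_rescale (a : R) (u : R⟦X⟧) :
    d⁄dX R (rescale a u) = C a * rescale a (d⁄dX R u) := by
  ext n
  simp only [coeff_derivative, coeff_rescale, coeff_C_mul, pow_succ]
  ring

theorem eq_zero_of_derivative_dvd [IsAddTorsionFree R] {u : R⟦X⟧} (h0 : constantCoeff u = 0)
    (hu : ∀ n, X ^ n ∣ u → X ^ n ∣ d⁄dX R u) : u = 0 := by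
  have hdvd : ∀ n, X ^ (n + 1) ∣ u := by
    intro n
    induction n with
    | zero => simpa [X_dvd_iff] using h0
    | succ n ih =>
      refine X_pow_dvd_iff.2 fun m hm => ?_
      rcases Nat.lt_succ_iff_lt_or_eq.1 hm with hm | rfl
      · exact X_pow_dvd_iff.1 ih m hm
      have h := X_pow_dvd_iff.1 (hu _ ih) n (Nat.lt_succ_self n)
      rw [coeff_derivative, mul_comm] at h
      refine nsmul_right_injective n.succ_ne_zero ?_
      simpa [nsmul_eq_mul] using h
  ext n
  simpa using X_pow_dvd_iff.1 (hdvd n) n (Nat.lt_succ_self n)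

theorem eq_zero_of_derivative_eq_mul [IsAddTorsionFree R] {u : R⟦X⟧} (g : R⟦X⟧)
    (h0 : constantCoeff u = 0) (hu : d⁄dX R u = g * u) : u = 0 :=
  eq_zero_of_derivative_dvd h0 fun _ h => hu ▸ dvd_mul_of_dvd_right h g

section MapDerivative

variable {A : Type*} [CommRing A]

noncomputable def mapDerivative : Derivation A A[X]⟦X⟧ A[X]⟦X⟧ :=
  Derivation.mk'
    { toFun := fun f => mk fun n => Polynomial.derivative (coeff n f)
      map_add' := fun f g => by ext; simp
      map_smul' := fun a f => by ext; simp }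
    fun f g => by
      ext n : 1
      rw [smul_eq_mul, smul_eq_mul, mul_comm g]
      simp [coeff_mul, ← Finset.sum_add_distrib, Polynomial.derivative_mul, add_comm]

theorem coeff_mapDerivative (f : A[X]⟦X⟧) (n : ℕ) :
    coeff n (mapDerivative f) = Polynomial.derivative (coeff n f) := by
  simp [mapDerivative]

theorem mapDerivative_C_X : mapDerivative (C (Polynomial.X : A[X])) = 1 := by
  ext n : 1
  by_cases hn : n = 0 <;> simp [coeff_mapDerivative, coeff_C, coeff_one, hn]

theorem mapDerivative_map_C (s : A⟦X⟧) : mapDerivative (map Polynomial.C s) = 0 := by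
  ext n : 1
  simp [coeff_mapDerivative]

@[simp]
theorem map_evalRingHom_map_C (a : A) (s : A⟦X⟧) :
    map (Polynomial.evalRingHom a) (map Polynomial.C s) = s := by
  ext n
  simp

theorem mapDerivative_derivative (f : A[X]⟦X⟧) :
    mapDerivative (d⁄dX A[X] f) = d⁄dX A[X] (mapDerivative f) := by
  ext n : 1
  simp [coeff_mapDerivative, coeff_derivative, Polynomial.derivative_mul]

theorem X_pow_dvd_mapDerivative {n : ℕ} {f : A[X]⟦X⟧} (h : X ^ n ∣ f) :
    X ^ n ∣ mapDerivative f :=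
  X_pow_dvd_iff.2 fun m hm => by rw [coeff_mapDerivative, X_pow_dvd_iff.1 h m hm, derivative_zero]

end MapDerivative

end PowerSeries

section Tangent

variable (K : Type*) [Field K] [CharZero K]

/-- The series `F(x, t)`, with `x = Polynomial.X` and `t = PowerSeries.X`. -/
noncomputable def egfT : K[X]⟦X⟧ :=
  PowerSeries.mk fun n => (n ! : K)⁻¹ • (T n).map (algebraMap ℚ K)

noncomputable def tanhSeries : PowerSeries K :=
  PowerSeries.map (Polynomial.evalRingHom 0) (egfT K)

noncomputable def oneAddXTanhInv : K[X]⟦X⟧ :=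
  PowerSeries.invOfUnit (1 + PowerSeries.C X * PowerSeries.map C (tanhSeries K)) 1

variable {K}

theorem coeff_egfT (n : ℕ) :
    PowerSeries.coeff n (egfT K) = (n ! : K)⁻¹ • (T n).map (algebraMap ℚ K) :=
  PowerSeries.coeff_mk _ _

theorem constantCoeff_egfT : PowerSeries.constantCoeff (egfT K) = X := by
  simp [← PowerSeries.coeff_zero_eq_constantCoeff_apply, coeff_egfT, T]

theorem derivative_egfT :
    d⁄dX K[X] (egfT K) = PowerSeries.C (1 - X ^ 2) * PowerSeries.mapDerivative (egfT K) := by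
  ext n : 1
  rw [PowerSeries.coeff_derivative, PowerSeries.coeff_C_mul, PowerSeries.coeff_mapDerivative,
    coeff_egfT, coeff_egfT]
  simp only [T, Polynomial.map_mul, derivative_smul, derivative_map, Nat.factorial_succ]
  have hn : ((n : K) + 1) * (((n : K) + 1) * n !)⁻¹ = (n ! : K)⁻¹ := by
    field_simp
  rw [show (n : K[X]) + 1 = C ((n : K) + 1) by simp, mul_comm, ← smul_eq_C_mul, smul_smul]
  push_cast
  rw [hn, mul_smul_comm]
  simp

theorem derivative_egfT_eq_one_sub_sq : d⁄dX K[X] (egfT K) = 1 - egfT K ^ 2 := by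
  set F := egfT K
  set a : K[X]⟦X⟧ := PowerSeries.C (1 - X ^ 2)
  have hdd : d⁄dX K[X] (d⁄dX K[X] F) = a * PowerSeries.mapDerivative (d⁄dX K[X] F) := by
    conv_lhs => rw [derivative_egfT]
    rw [PowerSeries.derivative_mul, PowerSeries.derivative_C, PowerSeries.mapDerivative_derivative]
    simp [a, F]
  have hsq : d⁄dX K[X] (F ^ 2) = a * PowerSeries.mapDerivative (F ^ 2) := by
    rw [PowerSeries.derivative_pow, Derivation.leibniz_pow, derivative_egfT]
    simp only [smul_eq_mul, nsmul_eq_mul]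
    ring
  have hu : d⁄dX K[X] (d⁄dX K[X] F + F ^ 2 - 1)
      = a * PowerSeries.mapDerivative (d⁄dX K[X] F + F ^ 2 - 1) := by
    simp only [map_sub, map_add, Derivation.map_one_eq_zero, hdd, hsq]
    ring
  have h0 : PowerSeries.constantCoeff (d⁄dX K[X] F + F ^ 2 - 1) = 0 := by
    rw [map_sub, map_add, map_pow, map_one, constantCoeff_egfT,
      ← PowerSeries.coeff_zero_eq_constantCoeff_apply, PowerSeries.coeff_derivative, coeff_egfT]
    simp [T]
  linear_combination PowerSeries.eq_zero_of_derivative_dvd h0 fun n h =>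
    hu ▸ dvd_mul_of_dvd_right (PowerSeries.X_pow_dvd_mapDerivative h) a

theorem coeff_tanhSeries (n : ℕ) :
    PowerSeries.coeff n (tanhSeries K) = (n ! : K)⁻¹ * aeval (0 : K) (T n) := by
  simp [tanhSeries, coeff_egfT, eval_map_algebraMap]

theorem constantCoeff_tanhSeries : PowerSeries.constantCoeff (tanhSeries K) = 0 := by
  simp [← PowerSeries.coeff_zero_eq_constantCoeff_apply, coeff_tanhSeries, T]

theorem tanhSeries_ne_zero : tanhSeries K ≠ 0 := by
  intro h
  simpa [coeff_tanhSeries, T] using congrArg (PowerSeries.coeff 1) h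

theorem derivative_tanhSeries : d⁄dX K (tanhSeries K) = 1 - tanhSeries K ^ 2 := by
  rw [tanhSeries, PowerSeries.derivative_map, derivative_egfT_eq_one_sub_sq]
  simp

theorem rescale_two_tanhSeries_mul :
    PowerSeries.rescale 2 (tanhSeries K) * (1 + tanhSeries K ^ 2) = 2 * tanhSeries K := by
  have h₂ : d⁄dX K (PowerSeries.rescale 2 (tanhSeries K))
      = 2 * (1 - PowerSeries.rescale 2 (tanhSeries K) ^ 2) := by
    rw [PowerSeries.derivative_rescale, derivative_tanhSeries, map_ofNat]
    simp
  refine sub_eq_zero.1 (PowerSeries.eq_zero_of_derivative_eq_mul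
    (-2 * (tanhSeries K + PowerSeries.rescale 2 (tanhSeries K))) ?_ ?_)
  · simp [constantCoeff_tanhSeries]
  · rw [map_sub, PowerSeries.derivative_mul, PowerSeries.derivative_mul, map_add,
      PowerSeries.derivative_pow, h₂, PowerSeries.derivative_ofNat, derivative_tanhSeries,
      PowerSeries.derivative_one]
    ring

theorem egfT_mul_one_add_X_mul_tanhSeries :
    egfT K * (1 + PowerSeries.C X * PowerSeries.map C (tanhSeries K))
      = PowerSeries.C X + PowerSeries.map C (tanhSeries K) := by
  have hτ : d⁄dX K[X] (PowerSeries.map C (tanhSeries K))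
      = 1 - PowerSeries.map C (tanhSeries K) ^ 2 := by
    simp [PowerSeries.derivative_map, derivative_tanhSeries]
  refine sub_eq_zero.1 (PowerSeries.eq_zero_of_derivative_eq_mul
    (-(egfT K + PowerSeries.map C (tanhSeries K))) ?_ ?_)
  · simp [constantCoeff_egfT, constantCoeff_tanhSeries]
  · rw [map_sub, map_add, PowerSeries.derivative_mul, map_add, PowerSeries.derivative_mul,
      PowerSeries.derivative_one, PowerSeries.derivative_C, hτ, derivative_egfT_eq_one_sub_sq]
    ring

theorem oneAddXTanh_mul_inv :
    (1 + PowerSeries.C X * PowerSeries.map C (tanhSeries K)) * oneAddXTanhInv K = 1 :=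
  PowerSeries.mul_invOfUnit _ _ (by simp [constantCoeff_tanhSeries])

end Tangent

noncomputable def integralPoly : ℝ[X] →ₗ[ℝ] ℝ where
  toFun p := ∫ x in (-1 : ℝ)..1, p.eval x
  map_add' p q := by
    simp only [eval_add]
    exact intervalIntegral.integral_add (p.continuous.intervalIntegrable _ _)
      (q.continuous.intervalIntegrable _ _)
  map_smul' a p := by simp

theorem integralPoly_apply (p : ℝ[X]) : integralPoly p = ∫ x in (-1 : ℝ)..1, p.eval x := rfl

theorem integralPoly_one : integralPoly 1 = 2 := by
  norm_num [integralPoly_apply]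

theorem integralPoly_derivative (p : ℝ[X]) :
    integralPoly (derivative p) = p.eval 1 - p.eval (-1) :=
  intervalIntegral.integral_eq_sub_of_hasDerivAt (fun x _ => p.hasDerivAt x)
    (p.derivative.continuous.intervalIntegrable _ _)

theorem integralPoly_X_mul_derivative (p : ℝ[X]) :
    integralPoly (X * derivative p) = p.eval 1 + p.eval (-1) - integralPoly p := by
  have h := integralPoly_derivative (X * p)
  rw [derivative_mul, derivative_X, one_mul, map_add] at h
  simp only [eval_mul, eval_X] at h
  linarith

noncomputable def integralSeries (f : ℝ[X]⟦X⟧) : ℝ⟦X⟧ :=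
  PowerSeries.mk fun n => integralPoly (PowerSeries.coeff n f)

theorem coeff_integralSeries (f : ℝ[X]⟦X⟧) (n : ℕ) :
    PowerSeries.coeff n (integralSeries f) = integralPoly (PowerSeries.coeff n f) :=
  PowerSeries.coeff_mk _ _

theorem integralSeries_sub (f g : ℝ[X]⟦X⟧) :
    integralSeries (f - g) = integralSeries f - integralSeries g := by
  ext n
  simp [coeff_integralSeries]

theorem integralSeries_map_C_mul (s : ℝ⟦X⟧) (f : ℝ[X]⟦X⟧) :
    integralSeries (PowerSeries.map C s * f) = s * integralSeries f := by
  ext n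
  simp [coeff_integralSeries, PowerSeries.coeff_mul, ← smul_eq_C_mul]

theorem integralSeries_one : integralSeries 1 = 2 := by
  ext n
  rw [← map_ofNat PowerSeries.C 2]
  by_cases hn : n = 0 <;> simp [coeff_integralSeries, PowerSeries.coeff_one, PowerSeries.coeff_C,
    hn, integralPoly_one]

theorem integralSeries_derivative (f : ℝ[X]⟦X⟧) :
    integralSeries (d⁄dX ℝ[X] f) = d⁄dX ℝ (integralSeries f) := by
  ext n
  rw [coeff_integralSeries, PowerSeries.coeff_derivative, PowerSeries.coeff_derivative,
    coeff_integralSeries, show ((n : ℝ[X]) + 1) = C ((n : ℝ) + 1) by simp, mul_comm,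
    ← smul_eq_C_mul, map_smul, smul_eq_mul, mul_comm]

theorem integralSeries_C_X_mul_mapDerivative (f : ℝ[X]⟦X⟧) :
    integralSeries (PowerSeries.C X * PowerSeries.mapDerivative f)
      = PowerSeries.map (evalRingHom 1) f + PowerSeries.map (evalRingHom (-1)) f
        - integralSeries f := by
  ext n
  simp [coeff_integralSeries, PowerSeries.coeff_mapDerivative, integralPoly_X_mul_derivative]

section Integration

local notation "τ" => tanhSeries ℝ

local notation "Q" => oneAddXTanhInv ℝ

/-- The formal counterpart of `∫₋₁¹ dx / (1 + x tanh t) = 2t / tanh t`. -/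
theorem tanhSeries_mul_integralSeries_oneAddXTanhInv :
    τ * integralSeries Q = 2 * PowerSeries.X := by
  have hPQ := oneAddXTanh_mul_inv (K := ℝ)
  have hτ : d⁄dX ℝ[X] (PowerSeries.map C τ) = PowerSeries.map C (1 - τ ^ 2) := by
    rw [PowerSeries.derivative_map, derivative_tanhSeries]
  have hQ : PowerSeries.map C τ * d⁄dX ℝ[X] Q
      = PowerSeries.map C (1 - τ ^ 2) * (PowerSeries.C X * PowerSeries.mapDerivative Q) := by
    rw [PowerSeries.derivative_eq_of_mul_eq_one hPQ,
      PowerSeries.mapDerivative.leibniz_of_mul_eq_one ((mul_comm _ _).trans hPQ)]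
    simp [hτ, PowerSeries.mapDerivative_C_X, PowerSeries.mapDerivative_map_C]
    ring
  have h₁ : (1 - τ ^ 2) * PowerSeries.map (evalRingHom 1) Q = 1 - τ := by
    have e := congrArg (PowerSeries.map (evalRingHom 1)) hPQ
    simp at e
    linear_combination (1 - τ) * e
  have h₂ : (1 - τ ^ 2) * PowerSeries.map (evalRingHom (-1)) Q = 1 + τ := by
    have e := congrArg (PowerSeries.map (evalRingHom (-1))) hPQ
    simp at e
    linear_combination (1 + τ) * e
  have hw : τ * d⁄dX ℝ (integralSeries Q) = 2 - (1 - τ ^ 2) * integralSeries Q := by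
    rw [← integralSeries_derivative, ← integralSeries_map_C_mul, hQ, integralSeries_map_C_mul,
      integralSeries_C_X_mul_mapDerivative]
    linear_combination h₁ + h₂
  apply PowerSeries.derivative.ext
  · rw [PowerSeries.derivative_mul, hw, derivative_tanhSeries, PowerSeries.derivative_mul]
    simp
    ring
  · simp [constantCoeff_tanhSeries]

theorem tanhSeries_sq_mul_integralSeries_egfT :
    τ ^ 2 * integralSeries (egfT ℝ) = 2 * τ - 2 * PowerSeries.X * (1 - τ ^ 2) := by
  have hPQ := oneAddXTanh_mul_inv (K := ℝ)
  have hF : egfT ℝ = (PowerSeries.C X + PowerSeries.map C τ) * Q := by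
    rw [← egfT_mul_one_add_X_mul_tanhSeries, mul_assoc, hPQ, mul_one]
  have h : PowerSeries.map C (τ ^ 2) * egfT ℝ
      = PowerSeries.map C τ * 1 - PowerSeries.map C (τ * (1 - τ ^ 2)) * Q := by
    simp only [map_mul, map_pow, map_sub, map_one]
    linear_combination PowerSeries.map C τ ^ 2 * hF + PowerSeries.map C τ * hPQ
  have hw := tanhSeries_mul_integralSeries_oneAddXTanhInv
  rw [← integralSeries_map_C_mul, h, integralSeries_sub, integralSeries_map_C_mul,
    integralSeries_map_C_mul, integralSeries_one]
  linear_combination (-(1 - τ ^ 2)) * hw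

theorem two_mul_rescale_integralSeries_egfT_sub :
    2 * PowerSeries.rescale 2 (integralSeries (egfT ℝ)) - integralSeries (egfT ℝ)
      = 2 * τ + 2 * (PowerSeries.X * d⁄dX ℝ τ) := by
  have hJ := tanhSeries_sq_mul_integralSeries_egfT
  have hJ₂ : τ ^ 2 * PowerSeries.rescale 2 (integralSeries (egfT ℝ))
      = τ * (1 + τ ^ 2) - PowerSeries.X * (1 - τ ^ 2) ^ 2 := by
    have h := congrArg (PowerSeries.rescale (2 : ℝ)) hJ
    simp only [map_mul, map_pow, map_sub, map_one, map_ofNat, PowerSeries.rescale_X] at h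
    have hD := rescale_two_tanhSeries_mul (K := ℝ)
    set τ₂ := PowerSeries.rescale (2 : ℝ) τ
    set J₂ := PowerSeries.rescale (2 : ℝ) (integralSeries (egfT ℝ))
    have h4 : (4 : ℝ⟦X⟧) ≠ 0 := fun h4 => by
      have h0 := congrArg PowerSeries.constantCoeff h4
      rw [map_ofNat, map_zero] at h0
      norm_num at h0
    refine mul_left_cancel₀ h4 ?_
    calc 4 * (τ ^ 2 * J₂) = (τ₂ * (1 + τ ^ 2)) ^ 2 * J₂ := by rw [hD]; ring
      _ = (1 + τ ^ 2) ^ 2 * (τ₂ ^ 2 * J₂) := by ring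
      _ = 2 * (1 + τ ^ 2) * (τ₂ * (1 + τ ^ 2))
          - 4 * PowerSeries.X * ((1 + τ ^ 2) ^ 2 - (τ₂ * (1 + τ ^ 2)) ^ 2) := by rw [h]; ring
      _ = 4 * (τ * (1 + τ ^ 2) - PowerSeries.X * (1 - τ ^ 2) ^ 2) := by rw [hD]; ring
  refine mul_left_cancel₀ (pow_ne_zero 2 tanhSeries_ne_zero) ?_
  rw [derivative_tanhSeries]
  linear_combination 2 * hJ₂ - hJ

end Integration

theorem coeff_integralSeries_egfT (n : ℕ) :
    PowerSeries.coeff n (integralSeries (egfT ℝ))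
      = (n ! : ℝ)⁻¹ * ∫ x in (-1 : ℝ)..1, aeval x (T n) := by
  simp [coeff_integralSeries, coeff_egfT, integralPoly_apply, eval_map_algebraMap]

theorem two_pow_sub_one_mul_integral_T (n : ℕ) :
    (2 ^ (n + 1) - 1) * ∫ x in (-1 : ℝ)..1, aeval x (T n)
      = (2 * n + 2) * aeval (0 : ℝ) (T n) := by
  have h := congrArg (PowerSeries.coeff n) two_mul_rescale_integralSeries_egfT_sub
  rw [← map_ofNat PowerSeries.C 2] at h
  simp only [map_sub, map_add, PowerSeries.coeff_C_mul, PowerSeries.coeff_rescale,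
    PowerSeries.coeff_X_mul_derivative, coeff_integralSeries_egfT, coeff_tanhSeries] at h
  have hn : (n ! : ℝ) ≠ 0 := by positivity
  field_simp at h
  linear_combination h

theorem integral_T_eq_tangent_general (n : ℕ) :
    ∫ x in (-1 : ℝ)..1, (Polynomial.aeval x (T n) : ℝ) =
      ((2 * (n : ℝ) + 2) / (2 ^ (n + 1) - 1)) * (Polynomial.aeval (0 : ℝ) (T n)) := by
  have h : (2 : ℝ) ^ (n + 1) - 1 ≠ 0 := by
    have : (1 : ℝ) < 2 ^ (n + 1) := one_lt_pow₀ one_lt_two n.succ_ne_zero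
    linarith
  rw [div_mul_eq_mul_div, eq_div_iff h, mul_comm, two_pow_sub_one_mul_integral_T]

theorem integral_T_eq_tangent (n : ℕ) (hn : 1 ≤ n) :
    ∫ x in (-1 : ℝ)..1, (Polynomial.aeval x (T n) : ℝ) =
      ((2 * (n : ℝ) + 2) / (2 ^ (n + 1) - 1)) * (Polynomial.aeval (0 : ℝ) (T n)) :=
  integral_T_eq_tangent_general n
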